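/- LDSR is not atomic-expressible via any prefix-determined semantics: for the LDSR program P = {a(Y) :- a(X), b(X,Y).} with a an input (extensional stream) predicate, and input stream I with Iᵢ = {a(1), b(1,2)} for all i, the streaming model at any time point τ contains a(2), an atom with an extensional stream predicate not in the input; hence no LARS answer stream for I (which may only add atoms with intensional predicates) can equal it. -/
import Mathlib

/-- Ground atoms of the example: `A x` stands for `a(x)`, `B x y` for `b(x,y)`.
Both predicates `a` and `b` are extensional stream predicates. -/
inductive GAtom : Type
  | A : ℕ → GAtom
  | B : ℕ → ℕ → GAtom
deriving DecidableEq

/-- The input stream `I` with `Iᵢ = {a(1), b(1,2)}` at every time point. -/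
def Inp : ℕ → Set GAtom := fun _ => {GAtom.A 1, GAtom.B 1 2}

/-- Membership in the streaming model of the LDSR program
`P = {a(Y) :- a(X), b(X,Y).}` on input `Inp` at a time point `τ`:
the least set containing the input and closed under the rule. -/
inductive SMem (τ : ℕ) : GAtom → Prop
  | input : ∀ g ∈ Inp τ, SMem τ g
  | rule : ∀ x y, SMem τ (GAtom.A x) → SMem τ (GAtom.B x y) → SMem τ (GAtom.A y)

/-- In this example all predicates are extensional stream predicates,
so no atom is intensional. -/
def intensional : GAtom → Prop := fun _ => False

/-- A LARS interpretation stream for input `Inp`: every atom occurring in it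
but not in the input must have an intensional predicate. -/
def InterpStream (Sig : ℕ → Set GAtom) : Prop :=
  ∀ i g, g ∈ Sig i → g ∈ Inp i ∨ intensional g

/-- Proposition 2 witness: the LDSR streaming model at any
time point `τ` contains `a(2)`; `a(2)` never occurs in the input and its
predicate is extensional; hence no LARS interpretation stream for the input
can contain `a(2)` — so no LARS answer stream equals the LDSR output. -/
theorem ldsr_not_atomic_expressible (τ : ℕ) :
    SMem τ (GAtom.A 2) ∧
    (∀ i, GAtom.A 2 ∉ Inp i) ∧
    (∀ Sig : ℕ → Set GAtom, InterpStream Sig → ∀ i, GAtom.A 2 ∉ Sig i) := by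
  have hna : ∀ i, GAtom.A 2 ∉ Inp i := by
    intro i h
    rcases h with h | h <;> simp_all
  refine ⟨?_, hna, ?_⟩
  · exact SMem.rule 1 2 (SMem.input _ (Or.inl rfl)) (SMem.input _ (Or.inr rfl))
  · intro Sig hS i h
    rcases hS i _ h with h' | h'
    · exact hna i h'
    · exact h'
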